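/- arXiv:2306.11861 — 2 statements merged into one kernel-verified Lean document; each statement's English description precedes it below -/
import Mathlib

section
/- (Representation Formula for quaternionic powers) For every n ∈ ℕ, every x, y ∈ ℝ, and every i, i' ∈ 𝕊², the quaternion (x + i' y)ⁿ equals (1/2)[(x+iy)ⁿ + (x-iy)ⁿ] + (1/2) i' i [(x-iy)ⁿ - (x+iy)ⁿ]. -/
open Quaternion

lemma sq_imag_unit (j : ℍ[ℝ]) (hre : j.re = 0) (hnorm : ‖j‖ = 1) : j * j = -1 := by
  have hstar : star j = -j := by ext <;> simp [hre]
  have h1 : normSq j = 1 := by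
    rw [Quaternion.normSq_eq_norm_mul_self, hnorm]; norm_num
  have h2 := Quaternion.self_mul_star j
  rw [hstar, h1, mul_neg] at h2
  have h3 : j * j = -(((1:ℝ)) : ℍ[ℝ]) := by
    rw [← neg_neg (j*j), h2]
  simpa using h3

lemma aux_pow (x y : ℝ) (n : ℕ) : ∃ p q : ℝ, ∀ j : ℍ[ℝ], j.re = 0 → ‖j‖ = 1 →
    (((x : ℝ) : ℍ[ℝ]) + y • j) ^ n = ((p : ℝ) : ℍ[ℝ]) + q • j := by
  induction n with
  | zero => exact ⟨1, 0, fun j _ _ => by simp⟩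
  | succ n ih =>
    obtain ⟨p, q, hpq⟩ := ih
    refine ⟨x * p - y * q, x * q + y * p, fun j hre hnorm => ?_⟩
    have hsq := sq_imag_unit j hre hnorm
    rw [pow_succ, hpq j hre hnorm]
    have h1 : ((1:ℍ[ℝ])) = ((1:ℝ) : ℍ[ℝ]) := by simp
    simp only [mul_add, add_mul, Quaternion.mul_coe_eq_smul, Quaternion.coe_mul_eq_smul,
      mul_smul_comm, smul_mul_assoc, smul_smul, hsq, smul_neg, h1,
      Algebra.algebraMap_eq_smul_one]
    rw [show (((x*p - y*q : ℝ)) : ℍ[ℝ]) = (x*p - y*q) • (1:ℍ[ℝ]) by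
      rw [← Quaternion.algebraMap_def, Algebra.algebraMap_eq_smul_one],
      show (((p : ℝ)) : ℍ[ℝ]) = (p:ℝ) • (1:ℍ[ℝ]) by
      rw [← Quaternion.algebraMap_def, Algebra.algebraMap_eq_smul_one],
      show (((1:ℝ)) : ℍ[ℝ]) = (1:ℝ) • (1:ℍ[ℝ]) by
      rw [← Quaternion.algebraMap_def, Algebra.algebraMap_eq_smul_one]]
    module

/-- Representation Formula for quaternionic powers: for all
`n ∈ ℕ`, `x, y ∈ ℝ` and purely imaginary unit quaternions `i, i'`,
`(x + i' y)ⁿ = (1/2)[(x+iy)ⁿ + (x-iy)ⁿ] + (1/2) i' i [(x-iy)ⁿ - (x+iy)ⁿ]`. -/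
theorem representation_formula_powers
    (n : ℕ) (x y : ℝ) (i i' : ℍ[ℝ])
    (hire : i.re = 0) (hinorm : ‖i‖ = 1)
    (hi're : i'.re = 0) (hi'norm : ‖i'‖ = 1) :
    (((x : ℝ) : ℍ[ℝ]) + y • i') ^ n =
      (2⁻¹ : ℝ) • ((((x : ℝ) : ℍ[ℝ]) + y • i) ^ n + (((x : ℝ) : ℍ[ℝ]) - y • i) ^ n)
      + (2⁻¹ : ℝ) • (i' * i *
          ((((x : ℝ) : ℍ[ℝ]) - y • i) ^ n - (((x : ℝ) : ℍ[ℝ]) + y • i) ^ n)) := by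
  obtain ⟨p, q, hpq⟩ := aux_pow x y n
  have hni : (-i).re = 0 := by simp [hire]
  have hninorm : ‖-i‖ = 1 := by simp [hinorm]
  have hmi : (((x : ℝ) : ℍ[ℝ]) - y • i) ^ n = ((p : ℝ) : ℍ[ℝ]) - q • i := by
    have := hpq (-i) hni hninorm
    rw [smul_neg, smul_neg, ← sub_eq_add_neg, ← sub_eq_add_neg] at this
    exact this
  rw [hpq i' hi're hi'norm, hpq i hire hinorm, hmi]
  have hsqi := sq_imag_unit i hire hinorm
  have hdiff : (((p : ℝ) : ℍ[ℝ]) - q • i) - (((p : ℝ) : ℍ[ℝ]) + q • i) = (-(2*q)) • i := by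
    module
  rw [hdiff]
  have key : i' * i * ((-(2*q)) • i) = (2*q) • i' := by
    rw [mul_smul_comm, mul_assoc, hsqi, mul_neg, mul_one]
    module
  rw [key]
  rw [show (((p : ℝ)) : ℍ[ℝ]) = (p:ℝ) • (1:ℍ[ℝ]) by
      rw [← Quaternion.algebraMap_def, Algebra.algebraMap_eq_smul_one]]
  module
end

section
/- For |q - a| < |ζ - a| with a ∈ ℝ, ζ ∈ ℂ(i) for some i ∈ 𝕊², and q ∈ ℍ, the slice regular Cauchy kernel admits the expansion S^{-1}(ζ, q) = Σ_{n=0}^∞ (q-a)ⁿ (ζ-a)^{-(n+1)}, where S^{-1}(ζ,q) = -(q² - 2Re(ζ)q + |ζ|²)^{-1}(q - ζ̄), and the series converges absolutely. -/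
open Quaternion Filter Topology

private lemma coe_two_mul_aux (x : ℝ) :
    ((2 * x : ℝ) : ℍ[ℝ]) = 2 * ((x : ℝ) : ℍ[ℝ]) := by
  rw [Quaternion.coe_mul,
    show ((2:ℝ) : ℍ[ℝ]) = 2 by
      rw [show (2:ℝ) = 1 + 1 by norm_num, Quaternion.coe_add, Quaternion.coe_one]
      norm_num]

/-- expansion of the slice regular Cauchy kernel.  For `a ∈ ℝ`,
`ζ` in a slice `ℂ(i)`, `q ∈ ℍ` with `‖q - a‖ < ‖ζ - a‖` and
`q² - 2 Re(ζ) q + |ζ|² ≠ 0`, the series `Σₙ (q-a)ⁿ (ζ-a)^{-(n+1)}` converges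
absolutely to `S⁻¹(ζ,q) = -(q² - 2Re(ζ)q + |ζ|²)⁻¹ (q - ζ̄)`. -/
theorem cauchy_kernel_series_expansion
    (a : ℝ) (i : ℍ[ℝ]) (hire : i.re = 0) (hinorm : ‖i‖ = 1)
    (ζ : ℍ[ℝ]) (hζ : ∃ u v : ℝ, ζ = ((u : ℝ) : ℍ[ℝ]) + v • i)
    (q : ℍ[ℝ]) (hlt : ‖q - ((a : ℝ) : ℍ[ℝ])‖ < ‖ζ - ((a : ℝ) : ℍ[ℝ])‖)
    (hden : q ^ 2 - 2 * ((ζ.re : ℝ) : ℍ[ℝ]) * q + ((‖ζ‖ ^ 2 : ℝ) : ℍ[ℝ]) ≠ 0) :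
    Summable (fun n : ℕ =>
      ‖(q - ((a : ℝ) : ℍ[ℝ])) ^ n * ((ζ - ((a : ℝ) : ℍ[ℝ])) ^ (n + 1))⁻¹‖) ∧
    HasSum (fun n : ℕ =>
      (q - ((a : ℝ) : ℍ[ℝ])) ^ n * ((ζ - ((a : ℝ) : ℍ[ℝ])) ^ (n + 1))⁻¹)
      (-(q ^ 2 - 2 * ((ζ.re : ℝ) : ℍ[ℝ]) * q + ((‖ζ‖ ^ 2 : ℝ) : ℍ[ℝ]))⁻¹ *
        (q - star ζ)) := by
  set A : ℍ[ℝ] := ((a : ℝ) : ℍ[ℝ]) with hA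
  set p : ℍ[ℝ] := q - A with hp
  set w : ℍ[ℝ] := ζ - A with hw
  set D : ℍ[ℝ] := q ^ 2 - 2 * ((ζ.re : ℝ) : ℍ[ℝ]) * q + ((‖ζ‖ ^ 2 : ℝ) : ℍ[ℝ])
    with hD
  set S : ℍ[ℝ] := -D⁻¹ * (q - star ζ) with hSdef
  set f : ℕ → ℍ[ℝ] := fun n => p ^ n * (w ^ (n + 1))⁻¹ with hf
  have hwpos : 0 < ‖w‖ := lt_of_le_of_lt (norm_nonneg p) hlt
  have hw0 : w ≠ 0 := by
    intro h; rw [h, norm_zero] at hwpos; exact lt_irrefl 0 hwpos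
  -- the key algebraic identity on the numerator
  have hcore : p * (q - star ζ) - (q - star ζ) * w = D := by
    have h1 : ζ + star ζ = ((2 * ζ.re : ℝ) : ℍ[ℝ]) := Quaternion.self_add_star' ζ
    have h2 : star ζ * ζ = ((normSq ζ : ℝ) : ℍ[ℝ]) := Quaternion.star_mul_self ζ
    have hAq : A * q = q * A := Quaternion.coe_commutes a q
    have hAs : A * star ζ = star ζ * A := Quaternion.coe_commutes a (star ζ)
    have expand : p * (q - star ζ) - (q - star ζ) * w =
        q * q - q * star ζ - q * ζ + star ζ * ζ + (q * A - A * q)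
          + (A * star ζ - star ζ * A) := by
      rw [hp, hw]; noncomm_ring
    rw [expand, hAq, hAs, sub_self, sub_self, add_zero, add_zero]
    have h3 : q * star ζ + q * ζ = 2 * ((ζ.re : ℝ) : ℍ[ℝ]) * q := by
      rw [← mul_add, add_comm (star ζ) ζ, h1, ← Quaternion.coe_commutes,
        coe_two_mul_aux]
    have h4 : ((normSq ζ : ℝ) : ℍ[ℝ]) = ((‖ζ‖ ^ 2 : ℝ) : ℍ[ℝ]) := by
      rw [Quaternion.normSq_eq_norm_mul_self, sq]
    rw [h2, h4, hD, ← h3]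
    noncomm_ring
  -- hence `S` solves the Sylvester equation  S w - p S = 1
  have hc2 : (2 * ((ζ.re : ℝ) : ℍ[ℝ])) = (((2 * ζ.re : ℝ)) : ℍ[ℝ]) := by
    rw [coe_two_mul_aux]
  have hDcq : Commute q D := by
    rw [hD, hc2]
    exact (((Commute.refl q).pow_right 2).sub_right
      (((Quaternion.coe_commute (2 * ζ.re) q).symm).mul_right
        (Commute.refl q))).add_right (Quaternion.coe_commute _ q).symm
  have hDp : Commute D p := hDcq.symm.sub_right (Quaternion.coe_commute a D).symm
  have hDS : D * S = -(q - star ζ) := by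
    rw [hSdef, neg_mul, mul_neg, ← mul_assoc, mul_inv_cancel₀ hden, one_mul]
  have hkey : S * w - p * S = 1 := by
    have hmain : D * (S * w - p * S) = D := by
      calc D * (S * w - p * S) = (D * S) * w - p * (D * S) := by
            rw [mul_sub, ← mul_assoc D p S, hDp.eq, mul_assoc p D S,
              ← mul_assoc D S w]
        _ = -(q - star ζ) * w - p * -(q - star ζ) := by rw [hDS]
        _ = p * (q - star ζ) - (q - star ζ) * w := by noncomm_ring
        _ = D := hcore
    exact mul_left_cancel₀ hden (hmain.trans (mul_one D).symm)
  -- telescoping representation of the terms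
  set g : ℕ → ℍ[ℝ] := fun n => p ^ n * S * (w ^ n)⁻¹ with hg
  have hfg : ∀ n, f n = g n - g (n + 1) := by
    intro n
    have hwn : (w ^ (n + 1)) ≠ 0 := pow_ne_zero _ hw0
    have hwn' : (w ^ n) ≠ 0 := pow_ne_zero _ hw0
    apply mul_right_cancel₀ hwn
    have hL : f n * w ^ (n + 1) = p ^ n := by
      rw [hf]
      simp only []
      rw [mul_assoc, inv_mul_cancel₀ hwn, mul_one]
    have hg1 : g n * w ^ (n + 1) = p ^ n * (S * w) := by
      rw [hg]
      simp only []
      rw [pow_succ w n, mul_assoc (p ^ n * S), ← mul_assoc (w ^ n)⁻¹,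
        inv_mul_cancel₀ hwn', one_mul, mul_assoc]
    have hg2 : g (n + 1) * w ^ (n + 1) = p ^ n * (p * S) := by
      rw [hg]
      simp only []
      rw [mul_assoc, inv_mul_cancel₀ hwn, mul_one, pow_succ p n, mul_assoc]
    rw [hL, sub_mul, hg1, hg2, ← mul_sub, hkey, mul_one]
  have hpart : ∀ N, ∑ n ∈ Finset.range N, f n = g 0 - g N := by
    intro N
    calc ∑ n ∈ Finset.range N, f n
        = ∑ n ∈ Finset.range N, (g n - g (n + 1)) :=
          Finset.sum_congr rfl fun n _ => hfg n
      _ = g 0 - g N := Finset.sum_range_sub' g N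
  have hg0 : g 0 = S := by simp [hg]
  -- summability
  have hr0 : 0 ≤ ‖p‖ / ‖w‖ := by positivity
  have hr1 : ‖p‖ / ‖w‖ < 1 := (div_lt_one hwpos).mpr hlt
  have hnorm : ∀ n, ‖f n‖ = ‖w‖⁻¹ * (‖p‖ / ‖w‖) ^ n := by
    intro n
    rw [hf]
    simp only []
    rw [norm_mul, norm_inv, norm_pow, norm_pow, pow_succ, mul_inv, div_pow,
      div_eq_mul_inv]
    ring
  have hsummn : Summable (fun n : ℕ => ‖f n‖) := by
    have := (summable_geometric_of_lt_one hr0 hr1).mul_left (‖w‖⁻¹)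
    exact this.congr fun n => (hnorm n).symm
  have hsf : Summable f := Summable.of_norm hsummn
  have hHasSum : HasSum f (∑' n, f n) := hsf.hasSum
  -- identify the sum via the telescoping limit
  have hgtend : Tendsto g atTop (𝓝 0) := by
    refine squeeze_zero_norm (a := fun N => ‖S‖ * (‖p‖ / ‖w‖) ^ N)
      (fun N => ?_) ?_
    · rw [hg]
      simp only []
      rw [norm_mul, norm_mul, norm_inv, norm_pow, norm_pow, div_pow]
      exact le_of_eq (by rw [div_eq_mul_inv]; ring)
    · have := (tendsto_pow_atTop_nhds_zero_of_lt_one hr0 hr1).const_mul ‖S‖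
      simpa using this
  have htend2 : Tendsto (fun N => ∑ n ∈ Finset.range N, f n) atTop (𝓝 S) := by
    have h1 : Tendsto (fun N => g 0 - g N) atTop (𝓝 (g 0 - 0)) :=
      tendsto_const_nhds.sub hgtend
    have h2 := h1.congr fun N => (hpart N).symm
    rwa [sub_zero, hg0] at h2
  have hsum_eq : (∑' n, f n) = S :=
    tendsto_nhds_unique hHasSum.tendsto_sum_nat htend2
  exact ⟨hsummn, hsum_eq ▸ hHasSum⟩
end
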